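/- Let ρ be a density matrix on a d-dimensional complex Hilbert space, set ν = 2 + √d, and let α satisfy 1 < α < 1 + (log 3)/(4 log ν). Then H_α(ρ) ≥ H(ρ) − 4(α−1)(log ν)². -/

import Mathlib

open scoped BigOperators ComplexOrder

noncomputable section

open Real Finset

/-! Write `α = 1 + t`. The bound `exp u ≤ 1 + u + u² / 2` for `u ≤ 0` gives
`p ^ α ≤ p + t p ln p + t² / 2 · p ln² p`, and with `ln S ≤ S - 1` this yields, in nats,
`H_α ≥ H - t M / 2` where `M = ∑ p ln² p`. The second log-moment `M` is controlled by
`-ln x ≤ ln d + 2 / (e √(d x))` (that is, `ln y ≤ y / e` at `y = 1 / √(d x)`) together with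
`∑ √p ≤ √d`, which give `M ≤ (ln d + 2 / e)² ≤ 9 ln² (2 + √d)`; passing to base 2 is then
affordable because `9 ln 2 ≤ 8`. -/

namespace Real

lemma exp_le_one_add_add_sq_div_two {u : ℝ} (hu : u ≤ 0) : exp u ≤ 1 + u + u ^ 2 / 2 := by
  have h := quadratic_le_exp_of_nonneg (neg_nonneg.mpr hu)
  have hinv : exp u * exp (-u) = 1 := by rw [← exp_add, add_neg_cancel, exp_zero]
  nlinarith [exp_pos u, sq_nonneg u]

lemma rpow_le_add_mul_log_add_mul_log_sq {x α : ℝ} (hx0 : 0 ≤ x) (hx1 : x ≤ 1) (hα : 1 ≤ α) :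
    x ^ α ≤ x + (α - 1) * (x * log x) + (α - 1) ^ 2 / 2 * (x * log x ^ 2) := by
  rcases hx0.eq_or_lt with rfl | hx
  · simp [zero_rpow (by linarith : α ≠ 0)]
  have hsplit : x ^ α = x * exp ((α - 1) * log x) := by
    rw [rpow_def_of_pos hx, show log x * α = log x + (α - 1) * log x by ring, exp_add,
      exp_log hx]
  have hexp := exp_le_one_add_add_sq_div_two
    (mul_nonpos_of_nonneg_of_nonpos (sub_nonneg.mpr hα) (log_nonpos hx0 hx1))
  rw [hsplit]
  nlinarith [mul_le_mul_of_nonneg_left hexp hx0]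

lemma log_le_div_exp_one {y : ℝ} (hy : 0 < y) : log y ≤ y / exp 1 := by
  have h := log_le_sub_one_of_pos (div_pos hy (exp_pos 1))
  rw [log_div hy.ne' (exp_pos 1).ne', log_exp] at h
  linarith

lemma sqrt_mul_neg_log_le {x n : ℝ} (hx : 0 < x) (hn : 0 < n) :
    √x * -log x ≤ √x * log n + 2 / (exp 1 * √n) := by
  have h := log_le_div_exp_one (inv_pos.mpr (sqrt_pos.mpr (mul_pos hn hx)))
  rw [log_inv, log_sqrt (mul_pos hn hx).le, log_mul hn.ne' hx.ne', sqrt_mul hn.le] at h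
  have hsx := sqrt_pos.mpr hx
  have hsn := sqrt_pos.mpr hn
  have key : √x * -log x - √x * log n ≤ 2 / (exp 1 * √n) := by
    calc √x * -log x - √x * log n = 2 * √x * -((log n + log x) / 2) := by ring
      _ ≤ 2 * √x * ((√n * √x)⁻¹ / exp 1) := by gcongr
      _ = 2 / (exp 1 * √n) := by field_simp
  linarith

lemma mul_log_sq_le {x n : ℝ} (hx0 : 0 ≤ x) (hx1 : x ≤ 1) (hn : 0 < n) :
    x * log x ^ 2 ≤ (√x * log n + 2 / (exp 1 * √n)) ^ 2 := by
  rcases hx0.eq_or_lt with rfl | hx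
  · simpa using sq_nonneg _
  calc x * log x ^ 2 = (√x * -log x) ^ 2 := by rw [mul_pow, sq_sqrt hx0, neg_sq]
    _ ≤ _ := pow_le_pow_left₀ (mul_nonneg (sqrt_nonneg x) (neg_nonneg.mpr (log_nonpos hx0 hx1)))
      (sqrt_mul_neg_log_le hx hn) 2

lemma log_add_two_div_exp_one_le {n : ℝ} (hn : 1 ≤ n) :
    log n + 2 / exp 1 ≤ 3 * log (2 + √n) := by
  have hsn : 1 ≤ √n := one_le_sqrt.mpr hn
  have hlog_n : log n ≤ 2 * log (2 + √n) := by
    have := log_le_log (by linarith) (show √n ≤ 2 + √n by linarith)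
    rw [log_sqrt (by linarith)] at this
    linarith
  have hone : 2 / exp 1 ≤ log (2 + √n) := by
    have h3 : 1 ≤ log 3 := by
      rw [le_log_iff_exp_le (by norm_num)]; exact exp_one_lt_three.le
    have := log_le_log (by norm_num : (0:ℝ) < 3) (show (3:ℝ) ≤ 2 + √n by linarith)
    rw [div_le_iff₀ (exp_pos 1)]
    nlinarith [exp_one_gt_two]
  linarith

end Real

section ProbabilityVector

variable {ι : Type*} [Fintype ι] {p : ι → ℝ}

def shannonEntropy (p : ι → ℝ) : ℝ := -∑ i, p i * logb 2 (p i)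

def renyiEntropy (α : ℝ) (p : ι → ℝ) : ℝ := 1 / (1 - α) * logb 2 (∑ i, p i ^ α)

lemma le_one_of_sum_eq_one (hp0 : ∀ i, 0 ≤ p i) (hp1 : ∑ i, p i = 1) (i : ι) : p i ≤ 1 :=
  hp1 ▸ single_le_sum (fun j _ => hp0 j) (mem_univ i)

lemma one_le_card_of_sum_eq_one (hp1 : ∑ i, p i = 1) : (1 : ℝ) ≤ Fintype.card ι := by
  have : Nonempty ι := by
    by_contra h
    rw [not_nonempty_iff] at h
    simp at hp1
  exact_mod_cast Fintype.card_pos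

lemma sum_sqrt_le_sqrt_card (hp0 : ∀ i, 0 ≤ p i) (hp1 : ∑ i, p i = 1) :
    ∑ i, √(p i) ≤ √(Fintype.card ι) := by
  simpa [hp1] using sum_sqrt_mul_sqrt_le univ hp0 (fun _ => zero_le_one)

lemma sum_mul_log_sq_le (hp0 : ∀ i, 0 ≤ p i) (hp1 : ∑ i, p i = 1) :
    ∑ i, p i * log (p i) ^ 2 ≤ (log (Fintype.card ι) + 2 / exp 1) ^ 2 := by
  set n : ℝ := (Fintype.card ι : ℝ)
  set c := 2 / (exp 1 * √n)
  have hn : 0 < n := zero_lt_one.trans_le (one_le_card_of_sum_eq_one hp1)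
  have hlog_n : 0 ≤ log n := log_nonneg (one_le_card_of_sum_eq_one hp1)
  have hc_sqrt : c * √n = 2 / exp 1 := by
    simp only [c]; field_simp [(sqrt_pos.mpr hn).ne']
  calc ∑ i, p i * log (p i) ^ 2 ≤ ∑ i, (√(p i) * log n + c) ^ 2 :=
        sum_le_sum fun i _ => mul_log_sq_le (hp0 i) (le_one_of_sum_eq_one hp0 hp1 i) hn
    _ = ∑ i, (log n ^ 2 * p i + 2 * c * log n * √(p i) + c ^ 2) :=
        sum_congr rfl fun i _ => by rw [add_sq, mul_pow, sq_sqrt (hp0 i)]; ring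
    _ = log n ^ 2 * ∑ i, p i + 2 * c * log n * ∑ i, √(p i) + n * c ^ 2 := by
        rw [sum_add_distrib, sum_add_distrib, ← mul_sum, ← mul_sum, sum_const, card_univ,
          nsmul_eq_mul]
    _ ≤ log n ^ 2 * 1 + 2 * c * log n * √n + n * c ^ 2 := by
        rw [hp1]; gcongr; exact sum_sqrt_le_sqrt_card hp0 hp1
    _ = (log n + c * √n) ^ 2 := by rw [add_sq, mul_pow c, sq_sqrt hn.le]; ring
    _ = (log n + 2 / exp 1) ^ 2 := by rw [hc_sqrt]

lemma sum_rpow_le (hp0 : ∀ i, 0 ≤ p i) (hp1 : ∑ i, p i = 1) {α : ℝ} (hα : 1 ≤ α) :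
    ∑ i, p i ^ α ≤
      1 + (α - 1) * ∑ i, p i * log (p i) + (α - 1) ^ 2 / 2 * ∑ i, p i * log (p i) ^ 2 := by
  calc ∑ i, p i ^ α
      ≤ ∑ i, (p i + (α - 1) * (p i * log (p i)) + (α - 1) ^ 2 / 2 * (p i * log (p i) ^ 2)) :=
        sum_le_sum fun i _ =>
          rpow_le_add_mul_log_add_mul_log_sq (hp0 i) (le_one_of_sum_eq_one hp0 hp1 i) hα
    _ = _ := by rw [sum_add_distrib, sum_add_distrib, hp1, mul_sum, mul_sum]

lemma sum_rpow_pos (hp0 : ∀ i, 0 ≤ p i) (hp1 : ∑ i, p i = 1) (α : ℝ) : 0 < ∑ i, p i ^ α := by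
  obtain ⟨i, -, hi⟩ := exists_ne_zero_of_sum_ne_zero (hp1 ▸ one_ne_zero : ∑ i, p i ≠ 0)
  exact sum_pos' (fun j _ => rpow_nonneg (hp0 j) α)
    ⟨i, mem_univ i, rpow_pos_of_pos ((hp0 i).lt_of_ne' hi) α⟩

lemma sum_mul_log_sq_le_nine_mul_log_sq (hp0 : ∀ i, 0 ≤ p i) (hp1 : ∑ i, p i = 1) :
    ∑ i, p i * log (p i) ^ 2 ≤ 9 * log (2 + √(Fintype.card ι)) ^ 2 := by
  have hn := one_le_card_of_sum_eq_one hp1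
  calc ∑ i, p i * log (p i) ^ 2 ≤ (log (Fintype.card ι) + 2 / exp 1) ^ 2 :=
        sum_mul_log_sq_le hp0 hp1
    _ ≤ (3 * log (2 + √(Fintype.card ι))) ^ 2 :=
        pow_le_pow_left₀ (add_nonneg (log_nonneg hn) (by positivity))
          (log_add_two_div_exp_one_le hn) 2
    _ = 9 * log (2 + √(Fintype.card ι)) ^ 2 := by ring

lemma neg_sum_mul_log_sub_le_log_sum_rpow_div (hp0 : ∀ i, 0 ≤ p i) (hp1 : ∑ i, p i = 1)
    {α : ℝ} (hα : 1 < α) :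
    -∑ i, p i * log (p i) - (α - 1) / 2 * ∑ i, p i * log (p i) ^ 2 ≤
      log (∑ i, p i ^ α) / (1 - α) := by
  have hlog := (log_le_sub_one_of_pos (sum_rpow_pos hp0 hp1 α)).trans
    (sub_le_sub_right (sum_rpow_le hp0 hp1 hα.le) 1)
  rw [le_div_iff_of_neg (by linarith)]
  linarith

theorem shannonEntropy_sub_le_renyiEntropy (hp0 : ∀ i, 0 ≤ p i) (hp1 : ∑ i, p i = 1)
    {α : ℝ} (hα : 1 < α) :
    shannonEntropy p - 4 * (α - 1) * logb 2 (2 + √(Fintype.card ι)) ^ 2 ≤ renyiEntropy α p := by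
  set L := log (2 + √(Fintype.card ι))
  have hl : 0 < log 2 := log_pos one_lt_two
  have hl8 : 9 * log 2 ≤ 8 := by linarith [log_two_lt_d9]
  have hsecond : (α - 1) / 2 * ∑ i, p i * log (p i) ^ 2 ≤ 4 * (α - 1) * L ^ 2 / log 2 := by
    have hM : ∑ i, p i * log (p i) ^ 2 ≤ 9 * L ^ 2 := sum_mul_log_sq_le_nine_mul_log_sq hp0 hp1
    have ht : 0 ≤ α - 1 := by linarith
    rw [le_div_iff₀ hl]
    calc (α - 1) / 2 * (∑ i, p i * log (p i) ^ 2) * log 2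
        ≤ (α - 1) / 2 * (9 * L ^ 2) * log 2 := by gcongr
      _ = (α - 1) * L ^ 2 * (9 * log 2) / 2 := by ring
      _ ≤ (α - 1) * L ^ 2 * 8 / 2 := by gcongr
      _ = 4 * (α - 1) * L ^ 2 := by ring
  have hnats := neg_sum_mul_log_sub_le_log_sum_rpow_div hp0 hp1 hα
  have hsum : ∑ i, p i * (log (p i) / log 2) = (∑ i, p i * log (p i)) / log 2 := by
    rw [sum_div]; exact sum_congr rfl fun i _ => mul_div_assoc' _ _ _
  simp only [shannonEntropy, renyiEntropy, logb, hsum]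
  calc -((∑ i, p i * log (p i)) / log 2) - 4 * (α - 1) * (L / log 2) ^ 2
      = (-∑ i, p i * log (p i) - 4 * (α - 1) * L ^ 2 / log 2) / log 2 := by
        field_simp
    _ ≤ (log (∑ i, p i ^ α) / (1 - α)) / log 2 := by gcongr; linarith
    _ = 1 / (1 - α) * (log (∑ i, p i ^ α) / log 2) := by ring

end ProbabilityVector

lemma Matrix.IsHermitian.sum_eigenvalues_eq_one {𝕜 n : Type*} [RCLike 𝕜] [Fintype n]
    [DecidableEq n] {A : Matrix n n 𝕜} (hA : A.IsHermitian) (h : A.trace = 1) :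
    ∑ i, hA.eigenvalues i = 1 := by
  have h_sum := hA.trace_eq_sum_eigenvalues
  rw [h] at h_sum
  exact_mod_cast h_sum.symm

theorem renyi_ge_vonNeumann_of_alpha_close_to_one_general
    {d : ℕ} (ρ : Matrix (Fin d) (Fin d) ℂ)
    (hρ : ρ.PosSemidef) (hρ1 : ρ.trace = 1) (α : ℝ)
    (hα1 : 1 < α) :
    (1 / (1 - α)) * Real.logb 2 (∑ i, hρ.isHermitian.eigenvalues i ^ α)
    ≥ (- ∑ i, hρ.isHermitian.eigenvalues i * Real.logb 2 (hρ.isHermitian.eigenvalues i))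
        - 4 * (α - 1) * (Real.logb 2 (2 + Real.sqrt d)) ^ 2 := by
  have h := shannonEntropy_sub_le_renyiEntropy hρ.eigenvalues_nonneg
    (hρ.isHermitian.sum_eigenvalues_eq_one hρ1) hα1
  rwa [Fintype.card_fin] at h

/-- For a density matrix ρ on a d-dimensional space, ν = 2 + √d, and
1 < α < 1 + (log 3)/(4 log ν) (logs base 2), the Rényi α-entropy satisfies
`H_α(ρ) ≥ H(ρ) − 4(α−1)(log ν)²`. -/
theorem renyi_ge_vonNeumann_of_alpha_close_to_one
    {d : ℕ} (ρ : Matrix (Fin d) (Fin d) ℂ)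
    (hρ : ρ.PosSemidef) (hρ1 : ρ.trace = 1) (α : ℝ)
    (hα1 : 1 < α)
    (hα2 : α < 1 + Real.logb 2 3 / (4 * Real.logb 2 (2 + Real.sqrt d))) :
    (1 / (1 - α)) * Real.logb 2 (∑ i, hρ.isHermitian.eigenvalues i ^ α)
    ≥ (- ∑ i, hρ.isHermitian.eigenvalues i * Real.logb 2 (hρ.isHermitian.eigenvalues i))
        - 4 * (α - 1) * (Real.logb 2 (2 + Real.sqrt d)) ^ 2 :=
  renyi_ge_vonNeumann_of_alpha_close_to_one_general ρ hρ hρ1 α hα1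

end
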